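/- arXiv:1112.6263 — 3 statements merged into one kernel-verified Lean document; each statement's English description precedes it below -/
import Mathlib

section
/- Let f_1,…,f_m ∈ F_2[x_1,…,x_n] with 1 ∈ ⟨f_1,…,f_m, x_1^2-x_1,…,x_n^2-x_n⟩, and suppose the homogenized ideal I^(h) = ⟨f_1^(h),…,f_m^(h), x_1^2-x_1h,…,x_n^2-x_nh⟩ has degree of regularity D (i.e., every homogeneous polynomial of degree D lies in I^(h)). Then there exist polynomials h_1,…,h_m, g_1,…,g_n ∈ F_2[x_1,…,x_n] with deg(h_i f_i) ≤ D and deg(g_j (x_j^2-x_j)) ≤ D for all i, j such that 1 = ∑_{i=1}^m h_i f_i + ∑_{j=1}^n g_j (x_j^2 - x_j). -/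
/-!
Since `h^D` is homogeneous of degree `D`, taking degree-`D` homogeneous components in any
representation `h^D = ∑ cᵢ qᵢ` by the homogeneous generators `qᵢ` of `I^(h)` makes every summand
`cᵢ qᵢ` homogeneous of degree `D`. Setting `h = 1` maps `homogenize fᵢ` to `fᵢ`,
`xⱼ² - xⱼh` to `xⱼ² - xⱼ` and `h^D` to `1`, and does not raise total degrees, so it turns that
representation into the required certificate.
-/

open MvPolynomial

/-- Homogenization of `f ∈ F_2[x_1,…,x_n]` with respect to a new variable `h`
(the last variable of `Fin (n+1)`). -/
noncomputable def homogenize {n : ℕ} (f : MvPolynomial (Fin n) (ZMod 2)) :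
    MvPolynomial (Fin (n + 1)) (ZMod 2) :=
  f.support.sum fun a =>
    MvPolynomial.monomial
      (Finsupp.mapDomain (Fin.castSucc) a +
        Finsupp.single (Fin.last n) (f.totalDegree - a.sum fun _ k => k))
      (f.coeff a)

namespace MvPolynomial

section Homogeneous

variable {σ R : Type*} [CommSemiring R]

attribute [local instance] gradedAlgebra in
theorem homogeneousComponent_mul_of_isHomogeneous {q : MvPolynomial σ R} {d : ℕ}
    (hq : q.IsHomogeneous d) (a : MvPolynomial σ R) (k : ℕ) :
    homogeneousComponent k (a * q) =
      if d ≤ k then homogeneousComponent (k - d) a * q else 0 := by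
  simpa only [DirectSum.decompose, Equiv.coe_fn_mk, decomposition.decompose'_apply] using
    DirectSum.coe_decompose_mul_of_right_mem (homogeneousSubmodule σ R) k hq (a := a)

theorem exists_isHomogeneous_combination_of_mem_span {ι : Type*} [Fintype ι]
    {q : ι → MvPolynomial σ R} {d : ι → ℕ} (hq : ∀ i, (q i).IsHomogeneous (d i))
    {p : MvPolynomial σ R} {D : ℕ} (hp : p.IsHomogeneous D) (hmem : p ∈ Ideal.span (Set.range q)) :
    ∃ c : ι → MvPolynomial σ R, (∀ i, (c i * q i).IsHomogeneous D) ∧ p = ∑ i, c i * q i := by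
  classical
  obtain ⟨c, rfl⟩ := Ideal.mem_span_range_iff_exists_fun.mp hmem
  refine ⟨fun i => if d i ≤ D then homogeneousComponent (D - d i) (c i) else 0, fun i => ?_, ?_⟩
  · rw [ite_mul, zero_mul, ← homogeneousComponent_mul_of_isHomogeneous (hq i)]
    exact homogeneousComponent_isHomogeneous D _
  · rw [← homogeneousComponent_eq_self hp, map_sum]
    simp only [homogeneousComponent_mul_of_isHomogeneous (hq _), ite_mul, zero_mul]

end Homogeneous

section Dehomogenize

variable {σ τ R : Type*} [CommSemiring R]

theorem totalDegree_aeval_le {x : σ → MvPolynomial τ R} (hx : ∀ i, (x i).totalDegree ≤ 1)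
    (p : MvPolynomial σ R) : (aeval x p).totalDegree ≤ p.totalDegree := by
  rw [aeval_eq_eval₂Hom, coe_eval₂Hom, eval₂_eq]
  refine (totalDegree_finsetSum _ _).trans (Finset.sup_le fun s hs => ?_)
  refine (totalDegree_mul _ _).trans ?_
  rw [algebraMap_eq, totalDegree_C, zero_add]
  calc (∏ i ∈ s.support, x i ^ s i).totalDegree
      ≤ ∑ i ∈ s.support, (x i ^ s i).totalDegree := totalDegree_finsetProd _ _
    _ ≤ ∑ i ∈ s.support, s i := Finset.sum_le_sum fun i _ =>
        (totalDegree_pow _ _).trans (by simpa using Nat.mul_le_mul_left (s i) (hx i))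
    _ ≤ p.totalDegree := le_totalDegree hs

variable {n : ℕ}

noncomputable def dehomogenize : MvPolynomial (Fin (n + 1)) R →ₐ[R] MvPolynomial (Fin n) R :=
  aeval (Fin.snoc X 1)

@[simp]
theorem dehomogenize_X_castSucc (j : Fin n) :
    dehomogenize (X j.castSucc : MvPolynomial (Fin (n + 1)) R) = X j := by
  simp [dehomogenize]

@[simp]
theorem dehomogenize_X_last :
    dehomogenize (X (Fin.last n) : MvPolynomial (Fin (n + 1)) R) = 1 := by
  simp [dehomogenize]

theorem dehomogenize_rename_castSucc (p : MvPolynomial (Fin n) R) :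
    dehomogenize (rename Fin.castSucc p) = p := by
  rw [dehomogenize, aeval_rename]
  convert aeval_X_left_apply p
  funext j
  simp

theorem totalDegree_dehomogenize_le (p : MvPolynomial (Fin (n + 1)) R) :
    (dehomogenize p).totalDegree ≤ p.totalDegree :=
  totalDegree_aeval_le
    (Fin.lastCases (by simp) fun j => by simpa using (isHomogeneous_X R j).totalDegree_le) p

end Dehomogenize

end MvPolynomial

theorem isHomogeneous_homogenize {n : ℕ} (f : MvPolynomial (Fin n) (ZMod 2)) :
    (homogenize f).IsHomogeneous f.totalDegree := by
  refine IsHomogeneous.sum _ _ _ fun a ha => isHomogeneous_monomial _ ?_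
  rw [map_add, Finsupp.degree_mapDomain, Finsupp.degree_single]
  exact Nat.add_sub_cancel' (le_totalDegree ha)

theorem dehomogenize_homogenize {n : ℕ} (f : MvPolynomial (Fin n) (ZMod 2)) :
    dehomogenize (homogenize f) = f := by
  rw [homogenize, map_sum]
  conv_rhs => rw [← support_sum_monomial_coeff f]
  refine Finset.sum_congr rfl fun a _ => ?_
  rw [monomial_add_single, map_mul, ← rename_monomial, dehomogenize_rename_castSucc, map_pow,
    dehomogenize_X_last, one_pow, mul_one]

theorem degree_bounded_nullstellensatz_certificate_general (n m D : ℕ)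
    (f : Fin m → MvPolynomial (Fin n) (ZMod 2))
    (hreg : ∀ p : MvPolynomial (Fin (n + 1)) (ZMod 2), p.IsHomogeneous D →
      p ∈ Ideal.span ((Set.range fun i => homogenize (f i)) ∪
        (Set.range fun j : Fin n =>
          (X j.castSucc : MvPolynomial (Fin (n + 1)) (ZMod 2)) ^ 2 -
            X j.castSucc * X (Fin.last n)))) :
    ∃ (h : Fin m → MvPolynomial (Fin n) (ZMod 2))
      (g : Fin n → MvPolynomial (Fin n) (ZMod 2)),
      (∀ i, (h i * f i).totalDegree ≤ D) ∧
      (∀ j, (g j * ((X j) ^ 2 - X j)).totalDegree ≤ D) ∧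
      (1 : MvPolynomial (Fin n) (ZMod 2)) =
        (∑ i, h i * f i) + ∑ j, g j * ((X j) ^ 2 - X j) := by
  set G : Fin n → MvPolynomial (Fin (n + 1)) (ZMod 2) :=
    fun j => X j.castSucc ^ 2 - X j.castSucc * X (Fin.last n)
  have hG : ∀ j, dehomogenize (G j) = X j ^ 2 - X j := by simp [G]
  have hXD : (X (Fin.last n) ^ D : MvPolynomial (Fin (n + 1)) (ZMod 2)).IsHomogeneous D :=
    isHomogeneous_X_pow _ _
  obtain ⟨c, hc, hsum⟩ := exists_isHomogeneous_combination_of_mem_span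
    (q := Sum.elim (fun i => homogenize (f i)) G) (d := Sum.elim (fun i => (f i).totalDegree) 2)
    (by rintro (i | j)
        · exact isHomogeneous_homogenize (f i)
        · exact (isHomogeneous_X_pow _ _).sub ((isHomogeneous_X _ _).mul (isHomogeneous_X _ _)))
    hXD (by rw [Set.Sum.elim_range]; exact hreg _ hXD)
  refine ⟨fun i => dehomogenize (c (.inl i)), fun j => dehomogenize (c (.inr j)), fun i => ?_,
    fun j => ?_, ?_⟩
  · rw [← dehomogenize_homogenize (f i), ← map_mul]
    exact (totalDegree_dehomogenize_le _).trans (hc (.inl i)).totalDegree_le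
  · rw [← hG, ← map_mul]
    exact (totalDegree_dehomogenize_le _).trans (hc (.inr j)).totalDegree_le
  · simpa [Fintype.sum_sum_type, dehomogenize_homogenize, hG] using congrArg dehomogenize hsum

/-- If `1 ∈ ⟨f_1,…,f_m, x_j²−x_j⟩` and the homogenized ideal `I^(h)` has degree of
regularity `D` (every homogeneous polynomial of degree `D` lies in `I^(h)`), then there is a
certificate `1 = ∑ h_i f_i + ∑ g_j (x_j²−x_j)` with `deg(h_i f_i) ≤ D` and
`deg(g_j(x_j²−x_j)) ≤ D`. -/
theorem degree_bounded_nullstellensatz_certificate (n m D : ℕ)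
    (f : Fin m → MvPolynomial (Fin n) (ZMod 2))
    (hone : (1 : MvPolynomial (Fin n) (ZMod 2)) ∈
      Ideal.span ((Set.range f) ∪ (Set.range fun j : Fin n => (X j) ^ 2 - X j)))
    (hreg : ∀ p : MvPolynomial (Fin (n + 1)) (ZMod 2), p.IsHomogeneous D →
      p ∈ Ideal.span ((Set.range fun i => homogenize (f i)) ∪
        (Set.range fun j : Fin n =>
          (X j.castSucc : MvPolynomial (Fin (n + 1)) (ZMod 2)) ^ 2 -
            X j.castSucc * X (Fin.last n)))) :
    ∃ (h : Fin m → MvPolynomial (Fin n) (ZMod 2))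
      (g : Fin n → MvPolynomial (Fin n) (ZMod 2)),
      (∀ i, (h i * f i).totalDegree ≤ D) ∧
      (∀ j, (g j * ((X j) ^ 2 - X j)).totalDegree ≤ D) ∧
      (1 : MvPolynomial (Fin n) (ZMod 2)) =
        (∑ i, h i * f i) + ∑ j, g j * ((X j) ^ 2 - X j) :=
  degree_bounded_nullstellensatz_certificate_general n m D f hreg
end

section
/- Let M(x) = -x + 1/2 + (1/2)·√(2x² - 10x - 1 + 2(x+2)√(x(x+2))) for real x ≥ 1. Then M is well-defined (the expressions under both square roots are nonnegative for x ≥ 1), M is strictly decreasing on [1,∞), and M(1) < 1/2. -/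
/-- The asymptotic constant `M(x) = -x + 1/2 + (1/2)√(2x²−10x−1+2(x+2)√(x(x+2)))`. -/
noncomputable def asymptM (x : ℝ) : ℝ :=
  -x + 1 / 2 + (1 / 2) * Real.sqrt (2 * x ^ 2 - 10 * x - 1 + 2 * (x + 2) * Real.sqrt (x * (x + 2)))

/-!
Substituting `x + 1 = J w` and `w - 1 = J z`, where `J e = (e + e⁻¹) / 2` is the Joukowsky map,
makes both square roots rational in `z`: `√(x(x+2)) = (w - w⁻¹) / 2` and the outer radicand is
`(w - 2)³ / w = ((z - 1)³ / (2z(z+1)))²`. This turns `M` into `(z² + 2z - 1) / (2z(z+1)²)`,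
which is strictly decreasing and below `1/2` for `z ≥ 1`. Since `J` is an increasing bijection
of `[1, ∞)`, `z ↦ x` is an increasing bijection from `[1, ∞)` onto `[1, ∞)`.
-/

open Set

noncomputable def joukowsky (e : ℝ) : ℝ := (e + e⁻¹) / 2

lemma one_le_joukowsky {e : ℝ} (he : 0 < e) : 1 ≤ joukowsky e := by
  have : 0 ≤ (e - 1) ^ 2 / e := by positivity
  have : (e - 1) ^ 2 / e = e + e⁻¹ - 2 := by field_simp; ring
  unfold joukowsky
  linarith

lemma joukowsky_le_self {e : ℝ} (he : 1 ≤ e) : joukowsky e ≤ e := by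
  unfold joukowsky
  linarith [inv_le_one_of_one_le₀ he]

lemma strictMonoOn_joukowsky : StrictMonoOn joukowsky (Ici 1) := by
  intro a (ha : 1 ≤ a) b (hb : 1 ≤ b) hab
  have : a⁻¹ - b⁻¹ < b - a := by
    rw [inv_sub_inv (by positivity) (by positivity), div_lt_iff₀ (by positivity)]
    nlinarith [mul_pos (sub_pos.2 hab) (show 0 < a * b - 1 by nlinarith)]
  unfold joukowsky
  linarith

lemma exists_joukowsky_eq {c : ℝ} (hc : 1 ≤ c) : ∃ e, 1 ≤ e ∧ joukowsky e = c := by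
  set r := √(c ^ 2 - 1)
  have hr2 : r ^ 2 = c ^ 2 - 1 := Real.sq_sqrt (by nlinarith)
  have hinv : (c + r)⁻¹ = c - r := by
    apply inv_eq_of_mul_eq_one_right
    linear_combination -hr2
  refine ⟨c + r, by linarith [Real.sqrt_nonneg (c ^ 2 - 1)], ?_⟩
  rw [joukowsky, hinv]
  ring

noncomputable def asymptParam (z : ℝ) : ℝ := joukowsky (joukowsky z + 1) - 1

noncomputable def asymptMRat (z : ℝ) : ℝ := (z ^ 2 + 2 * z - 1) / (2 * z * (z + 1) ^ 2)

lemma asymptParam_eq {z : ℝ} (hz : 0 < z) :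
    asymptParam z = (z ^ 2 + 1) ^ 2 / (4 * z * (z + 1) ^ 2) := by
  unfold asymptParam joukowsky
  field_simp
  ring

lemma strictMonoOn_asymptParam : StrictMonoOn asymptParam (Ici 1) := by
  have h : ∀ z ∈ Ici (1 : ℝ), joukowsky z + 1 ∈ Ici 1 := fun z (hz : 1 ≤ z) =>
    mem_Ici.2 (by linarith [one_le_joukowsky (by linarith : (0 : ℝ) < z)])
  intro a ha b hb hab
  have := strictMonoOn_joukowsky (h a ha) (h b hb)
    (add_lt_add_left (strictMonoOn_joukowsky ha hb hab) 1)
  unfold asymptParam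
  linarith

lemma exists_asymptParam_eq {x : ℝ} (hx : 1 ≤ x) : ∃ z, 1 ≤ z ∧ asymptParam z = x := by
  obtain ⟨w, hw, hwx⟩ := exists_joukowsky_eq (by linarith : 1 ≤ x + 1)
  obtain ⟨z, hz, hzw⟩ := exists_joukowsky_eq (by linarith [joukowsky_le_self hw] : 1 ≤ w - 1)
  exact ⟨z, hz, by rw [asymptParam, hzw, sub_add_cancel, hwx, add_sub_cancel_right]⟩

lemma sqrt_asymptParam_mul_add_two {z : ℝ} (hz : 0 < z) :
    √(asymptParam z * (asymptParam z + 2)) =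
      (z ^ 2 + 1) * (z ^ 2 + 4 * z + 1) / (4 * z * (z + 1) ^ 2) := by
  have hroot : 0 ≤ (z ^ 2 + 1) * (z ^ 2 + 4 * z + 1) / (4 * z * (z + 1) ^ 2) := by positivity
  rw [← Real.sqrt_sq hroot, asymptParam_eq hz]
  congr 1
  field_simp
  ring

lemma asymptRadicand_asymptParam {z : ℝ} (hz : 0 < z) :
    2 * asymptParam z ^ 2 - 10 * asymptParam z - 1 +
        2 * (asymptParam z + 2) * √(asymptParam z * (asymptParam z + 2)) =
      ((z - 1) ^ 3 / (2 * z * (z + 1))) ^ 2 := by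
  rw [sqrt_asymptParam_mul_add_two hz, asymptParam_eq hz]
  field_simp
  ring

lemma asymptM_asymptParam {z : ℝ} (hz : 1 ≤ z) : asymptM (asymptParam z) = asymptMRat z := by
  have hz0 : 0 < z := by linarith
  have hroot : 0 ≤ (z - 1) ^ 3 / (2 * z * (z + 1)) :=
    div_nonneg (pow_nonneg (sub_nonneg.2 hz) 3) (by positivity)
  rw [asymptM, asymptRadicand_asymptParam hz0, Real.sqrt_sq hroot, asymptParam_eq hz0, asymptMRat]
  field_simp
  ring

lemma strictAntiOn_asymptMRat : StrictAntiOn asymptMRat (Ici 1) := by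
  intro a (ha : 1 ≤ a) b (hb : 1 ≤ b) hab
  rw [asymptMRat, asymptMRat, div_lt_div_iff₀ (by positivity) (by positivity)]
  -- the difference of the cross products is `2(b - a)` times this polynomial
  have hpos : 0 < a ^ 2 * b ^ 2 + 2 * a ^ 2 * b + 2 * a * b ^ 2 + 2 * a * b
      - a ^ 2 - b ^ 2 - 2 * a - 2 * b - 1 := by
    nlinarith [mul_le_mul ha hb zero_le_one (by linarith)]
  nlinarith [mul_pos (sub_pos.2 hab) hpos]

lemma asymptMRat_lt_half {z : ℝ} (hz : 1 ≤ z) : asymptMRat z < 1 / 2 := by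
  rw [asymptMRat, div_lt_div_iff₀ (by positivity) (by norm_num)]
  nlinarith

/-- `M` is well-defined for `x ≥ 1` (both radicands are nonnegative), strictly decreasing
on `[1,∞)`, and `M(1) < 1/2`. -/
theorem asymptM_properties :
    (∀ x : ℝ, 1 ≤ x → 0 ≤ x * (x + 2) ∧
        0 ≤ 2 * x ^ 2 - 10 * x - 1 + 2 * (x + 2) * Real.sqrt (x * (x + 2))) ∧
      StrictAntiOn asymptM (Set.Ici 1) ∧ asymptM 1 < 1 / 2 := by
  refine ⟨fun x hx => ⟨by nlinarith, ?_⟩, ?_, ?_⟩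
  · obtain ⟨z, hz, rfl⟩ := exists_asymptParam_eq hx
    rw [asymptRadicand_asymptParam (by linarith)]
    positivity
  · intro x hx y hy hxy
    obtain ⟨a, ha, rfl⟩ := exists_asymptParam_eq hx
    obtain ⟨b, hb, rfl⟩ := exists_asymptParam_eq hy
    rw [asymptM_asymptParam ha, asymptM_asymptParam hb]
    exact strictAntiOn_asymptMRat ha hb ((strictMonoOn_asymptParam.lt_iff_lt ha hb).1 hxy)
  · obtain ⟨z, hz, hz1⟩ := exists_asymptParam_eq le_rfl
    calc asymptM 1 = asymptMRat z := by rw [← hz1, asymptM_asymptParam hz]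
      _ < 1 / 2 := asymptMRat_lt_half hz
end

section
/- For integers n ≥ 2, m ≥ 1 and 2 ≤ d < n/2, setting x = d/n, the number of rows of the boolean Macaulay matrix in degree d of m quadratic polynomials in n variables, r = m·∑_{i=0}^{d-2} C(n,i), satisfies r < m · (x²/((1-2x)(1-x))) · C(n,d). -/
/-- For `n ≥ 2`, `m ≥ 1`, `2 ≤ d < n/2` and `x = d/n`, the number of rows
`r = m·∑_{i=0}^{d-2} C(n,i)` of the boolean Macaulay matrix in degree `d` satisfies
`r < m · x²/((1-2x)(1-x)) · C(n,d)`. -/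
theorem macaulay_rows_bound (n m d : ℕ) (hn : 2 ≤ n) (hm : 1 ≤ m) (hd2 : 2 ≤ d)
    (hdn : 2 * d < n) :
    ((m * ∑ i ∈ Finset.range (d - 1), n.choose i : ℕ) : ℝ) <
      (m : ℝ) * (((d : ℝ) / n) ^ 2 /
          ((1 - 2 * ((d : ℝ) / n)) * (1 - (d : ℝ) / n))) * (n.choose d : ℝ) := by
  have hdn' : d ≤ n := by omega
  have hBA : (d : ℝ) < n := by exact_mod_cast (by omega : d < n)
  have h2BA : 2 * (d : ℝ) < n := by
    have : ((2 * d : ℕ) : ℝ) < n := by exact_mod_cast hdn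
    push_cast at this; linarith
  have hA : (0 : ℝ) < n := by
    have : ((2:ℕ):ℝ) ≤ n := by exact_mod_cast hn
    linarith
  have hB : (0 : ℝ) < d := by exact_mod_cast (by omega : 0 < d)
  have hnd1 : (0 : ℝ) < (n : ℝ) - d + 1 := by linarith
  set r : ℝ := (d : ℝ) / ((n : ℝ) - d + 1) with hrdef
  have hr0 : 0 < r := div_pos hB hnd1
  have hr1 : r < 1 := by rw [hrdef, div_lt_one hnd1]; linarith
  have key : ∀ j, j ≤ d → ((n.choose (d - j) : ℝ)) ≤ (n.choose d : ℝ) * r ^ j := by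
    intro j
    induction j with
    | zero => intro _; simp
    | succ j ih =>
      intro hj
      have ihj := ih (by omega)
      have step : n.choose (d - (j + 1)) * (n - d + 1) ≤ n.choose (d - j) * d := by
        calc n.choose (d - (j + 1)) * (n - d + 1)
            ≤ n.choose (d - (j + 1)) * (n - (d - (j + 1))) :=
              Nat.mul_le_mul_left _ (by omega)
          _ = n.choose (d - j) * (d - j) := by
              have h := Nat.choose_succ_right_eq n (d - (j + 1))
              have h1 : d - (j + 1) + 1 = d - j := by omega
              rw [h1] at h
              exact h.symm
          _ ≤ n.choose (d - j) * d := Nat.mul_le_mul_left _ (by omega)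
      have stepR : (n.choose (d - (j + 1)) : ℝ) ≤ (n.choose (d - j) : ℝ) * r := by
        rw [hrdef, ← mul_div_assoc, le_div_iff₀ hnd1]
        have h2 : ((n.choose (d - (j + 1)) * (n - d + 1) : ℕ) : ℝ) ≤
            ((n.choose (d - j) * d : ℕ) : ℝ) := by exact_mod_cast step
        push_cast [Nat.cast_sub hdn'] at h2
        linarith
      calc (n.choose (d - (j + 1)) : ℝ) ≤ (n.choose (d - j) : ℝ) * r := stepR
        _ ≤ ((n.choose d : ℝ) * r ^ j) * r :=
            mul_le_mul_of_nonneg_right ihj (le_of_lt hr0)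
        _ = (n.choose d : ℝ) * r ^ (j + 1) := by ring
  have sum1 : (∑ i ∈ Finset.range (d - 1), (n.choose i : ℝ)) ≤
      (n.choose d : ℝ) * ∑ i ∈ Finset.range (d - 1), r ^ (d - i) := by
    rw [Finset.mul_sum]
    apply Finset.sum_le_sum
    intro i hi
    have hi' : i < d - 1 := Finset.mem_range.mp hi
    have h := key (d - i) (by omega)
    have h2 : d - (d - i) = i := by omega
    rwa [h2] at h
  have sum2 : ∑ i ∈ Finset.range (d - 1), r ^ (d - i) =
      ∑ i ∈ Finset.range (d - 1), r ^ 2 * r ^ i := by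
    rw [← Finset.sum_range_reflect (fun i => r ^ (d - i)) (d - 1)]
    apply Finset.sum_congr rfl
    intro i hi
    have hi' : i < d - 1 := Finset.mem_range.mp hi
    have h3 : d - (d - 1 - 1 - i) = i + 2 := by omega
    simp only [h3]
    ring
  have h1r : 0 < 1 - r := by linarith
  have geom : ∑ i ∈ Finset.range (d - 1), r ^ i ≤ 1 / (1 - r) := by
    rw [geom_sum_eq (ne_of_lt hr1)]
    have he : (r ^ (d - 1) - 1) / (r - 1) = (1 - r ^ (d - 1)) / (1 - r) := by
      rw [div_eq_div_iff (sub_ne_zero.mpr (ne_of_lt hr1)) (ne_of_gt h1r)]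
      ring
    rw [he, div_le_div_iff₀ h1r h1r]
    have hrp : 0 ≤ r ^ (d - 1) := by positivity
    nlinarith
  have hcd : (0 : ℝ) < n.choose d := by
    exact_mod_cast Nat.choose_pos hdn'
  have sumS : (∑ i ∈ Finset.range (d - 1), (n.choose i : ℝ)) ≤
      (n.choose d : ℝ) * (r ^ 2 * (1 / (1 - r))) := by
    calc (∑ i ∈ Finset.range (d - 1), (n.choose i : ℝ))
        ≤ (n.choose d : ℝ) * ∑ i ∈ Finset.range (d - 1), r ^ (d - i) := sum1
      _ = (n.choose d : ℝ) * (r ^ 2 * ∑ i ∈ Finset.range (d - 1), r ^ i) := by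
          rw [sum2, ← Finset.mul_sum]
      _ ≤ (n.choose d : ℝ) * (r ^ 2 * (1 / (1 - r))) := by
          apply mul_le_mul_of_nonneg_left _ (le_of_lt hcd)
          exact mul_le_mul_of_nonneg_left geom (by positivity)
  -- rewrite r^2/(1-r)
  have hden1 : ((n : ℝ) - d + 1) * ((n : ℝ) - 2 * d + 1) > 0 := by nlinarith
  have hreq : r ^ 2 * (1 / (1 - r)) =
      (d : ℝ) ^ 2 / (((n : ℝ) - d + 1) * ((n : ℝ) - 2 * d + 1)) := by
    have ha : ((n : ℝ) - d + 1) ≠ 0 := ne_of_gt hnd1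
    have hb : ((n : ℝ) - 2 * d + 1) ≠ 0 := ne_of_gt (by linarith)
    have h1 : (1 : ℝ) - r = ((n : ℝ) - 2 * d + 1) / ((n : ℝ) - d + 1) := by
      rw [hrdef]; field_simp; ring
    rw [h1, hrdef]
    field_simp
  have hfinal : (n.choose d : ℝ) * (r ^ 2 * (1 / (1 - r))) <
      (d : ℝ) ^ 2 / (((n : ℝ) - 2 * d) * ((n : ℝ) - d)) * (n.choose d : ℝ) := by
    rw [hreq]
    rw [mul_comm]
    apply mul_lt_mul_of_pos_right _ hcd
    apply div_lt_div_of_pos_left (by positivity) (by nlinarith) (by nlinarith)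
  -- identity for the x-expression
  have hx : ((d : ℝ) / n) ^ 2 / ((1 - 2 * ((d : ℝ) / n)) * (1 - (d : ℝ) / n)) =
      (d : ℝ) ^ 2 / (((n : ℝ) - 2 * d) * ((n : ℝ) - d)) := by
    have ha : ((n : ℝ)) ≠ 0 := ne_of_gt hA
    have hb : ((n : ℝ) - 2 * d) ≠ 0 := ne_of_gt (by linarith)
    have hc : ((n : ℝ) - d) ≠ 0 := ne_of_gt (by linarith)
    field_simp
  have hM : (0 : ℝ) < m := by exact_mod_cast (by omega : 0 < m)
  rw [hx]
  push_cast
  calc (m : ℝ) * ∑ i ∈ Finset.range (d - 1), (n.choose i : ℝ)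
      ≤ (m : ℝ) * ((n.choose d : ℝ) * (r ^ 2 * (1 / (1 - r)))) :=
        mul_le_mul_of_nonneg_left sumS (le_of_lt hM)
    _ < (m : ℝ) * ((d : ℝ) ^ 2 / (((n : ℝ) - 2 * d) * ((n : ℝ) - d)) * (n.choose d : ℝ)) :=
        mul_lt_mul_of_pos_left hfinal hM
    _ = (m : ℝ) * ((d : ℝ) ^ 2 / (((n : ℝ) - 2 * d) * ((n : ℝ) - d))) * (n.choose d : ℝ) := by
        ring
end
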